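/- Let T be a finite rooted tree. To each internal node l associate a design variable ρ_l ∈ ℝ^{d_l} and differentiable weight functions ω_{l,i} : ℝ^{d_l} → ℝ for i ∈ C(l); to each leaf l associate a constant κ_l ∈ ℝ. Define κ̃_l(ρ) recursively by κ̃_l = κ_l for leaves and κ̃_l(ρ) = Σ_{i ∈ C(l)} ω_{l,i}(ρ_l) κ̃_i(ρ) for internal nodes, where ρ = (ρ_m)_{m internal node}. Then for every internal node l₀, the partial derivative of the root value with respect to the design variable ρ_{l₀} is ∂_{ρ_{l₀}} κ̃_root = (Π_{edges (p,c) on the path from the root to l₀} ω_{p,c}(ρ_p)) · Σ_{i ∈ C(l₀)} κ̃_i(ρ) · dω_{l₀,i}/dρ_{l₀}, i.e. the recursive derivative evaluation of Algorithm 1 is correct. -/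

import Mathlib

/-!
Moving the design variable of the node `l₀` changes only the subtree of `l₀`. At each ancestor,
the value is affine in the value of its child on the path to `l₀`, with slope the weight of that
branch (`interp_node_set`), so by induction along the path the derivative at the root is the
product of these weights times the derivative at `l₀`, which is `Σ κ̃_i • dω_{l₀,i}` because the
children of `l₀` do not depend on `ρ_{l₀}`.
-/

variable {E : Type*} [NormedAddCommGroup E] [NormedSpace ℝ E]

/-- A finite rooted tree for hierarchical interpolation: leaves carry a constant
material property `κ ∈ ℝ`; each internal node `l` carries its own (dissociated)
design variable `ρ_l : E` together with the list of its children, each child being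
paired with its weight function `ω_{l,i} : E → ℝ`. -/
inductive DTree (E : Type*) : Type _ where
  | leaf (κ : ℝ)
  | node (ρ : E) (children : List ((E → ℝ) × DTree E))

namespace DTree

/-- Recursive interpolation (eq. (3) of the paper): `κ̃_l = κ_l` on leaves and
`κ̃_l(ρ) = Σ_{i ∈ C(l)} ω_{l,i}(ρ_l) κ̃_i(ρ)` on internal nodes, each weight being
evaluated at the design variable stored in its node. -/
def interp : DTree E → ℝ
  | leaf κ => κ
  | node ρ cs => (cs.attach.map (fun p => p.1.1 ρ * interp p.1.2)).sum
decreasing_by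
  obtain ⟨⟨ω, t'⟩, hmem⟩ := p
  have h := List.sizeOf_lt_of_mem hmem
  simp only [Prod.mk.sizeOf_spec, DTree.node.sizeOf_spec] at h ⊢
  omega

/-- Subtree rooted at the node reached from the root by following the list of child
indices `p` (Neveu's notation), if it exists. -/
def subAt : DTree E → List ℕ → Option (DTree E)
  | t, [] => some t
  | leaf _, _ :: _ => none
  | node _ cs, i :: p =>
      match cs[i]? with
      | some q => subAt q.2 p
      | none => none

/-- Replace by `x` the design variable stored at the node reached from the root by
following the list of child indices `p`, leaving every other node untouched. -/
def updateAt : DTree E → List ℕ → E → DTree E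
  | leaf κ, _, _ => leaf κ
  | node _ cs, [], x => node x cs
  | node ρ cs, i :: p, x =>
      match cs[i]? with
      | some q => node ρ (cs.set i (q.1, updateAt q.2 p x))
      | none => node ρ cs

/-- Product of the branch weights `ω_{p,c}(ρ_p)` along the path from the root to the
node addressed by the list of child indices `p`. -/
def pathProd : DTree E → List ℕ → ℝ
  | _, [] => 1
  | leaf _, _ :: _ => 1
  | node ρ cs, i :: p =>
      match cs[i]? with
      | some q => q.1 ρ * pathProd q.2 p
      | none => 1

section

variable {V : Type*}

theorem interp_node (ρ : V) (cs : List ((V → ℝ) × DTree V)) :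
    interp (node ρ cs) = (cs.map fun q => q.1 ρ * interp q.2).sum := by
  rw [interp, List.attach_map_val (f := fun q : (V → ℝ) × DTree V => q.1 ρ * interp q.2)]

theorem interp_node_set {ρ : V} {cs : List ((V → ℝ) × DTree V)} {i : ℕ}
    {q : (V → ℝ) × DTree V} (hq : cs[i]? = some q) (t' : DTree V) :
    interp (node ρ (cs.set i (q.1, t'))) =
      interp (node ρ cs) + q.1 ρ * (interp t' - interp q.2) := by
  obtain ⟨hi, rfl⟩ := List.getElem?_eq_some_iff.mp hq
  simp only [interp_node, List.map_set, List.sum_set', List.length_map, hi, dif_pos,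
    List.getElem_map]
  ring

theorem subAt_cons_eq_some {t s : DTree V} {i : ℕ} {p : List ℕ}
    (h : subAt t (i :: p) = some s) :
    ∃ ρ cs q, t = node ρ cs ∧ cs[i]? = some q ∧ subAt q.2 p = some s := by
  match t, h with
  | node ρ cs, h =>
    unfold subAt at h
    cases hq : cs[i]? with
    | none => simp [hq] at h
    | some q => exact ⟨ρ, cs, q, rfl, hq, by simpa [hq] using h⟩

theorem updateAt_node_cons {ρ x : V} {cs : List ((V → ℝ) × DTree V)} {i : ℕ} {p : List ℕ}
    {q : (V → ℝ) × DTree V} (hq : cs[i]? = some q) :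
    updateAt (node ρ cs) (i :: p) x = node ρ (cs.set i (q.1, updateAt q.2 p x)) := by
  simp [updateAt, hq]

theorem pathProd_node_cons {ρ : V} {cs : List ((V → ℝ) × DTree V)} {i : ℕ} {p : List ℕ}
    {q : (V → ℝ) × DTree V} (hq : cs[i]? = some q) :
    pathProd (node ρ cs) (i :: p) = q.1 ρ * pathProd q.2 p := by
  simp [pathProd, hq]

end

theorem hasFDerivAt_sum_map_mul {α : Type*} (l : List ((E → ℝ) × α)) (c : α → ℝ) {x₀ : E}
    (hdiff : ∀ q ∈ l, DifferentiableAt ℝ q.1 x₀) :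
    HasFDerivAt (fun x => (l.map fun q => q.1 x * c q.2).sum)
      (l.map fun q => c q.2 • fderiv ℝ q.1 x₀).sum x₀ := by
  induction l with
  | nil => simpa using hasFDerivAt_const (0 : ℝ) x₀
  | cons q l ih =>
    simp only [List.map_cons, List.sum_cons]
    exact ((hdiff q List.mem_cons_self).hasFDerivAt.mul_const (c q.2)).add
      (ih fun r hr => hdiff r (List.mem_cons_of_mem _ hr))

/-- correctness of Algorithm 1: let `l₀` be the internal node addressed
by the path `p`, carrying the design variable `ρ₀` and children `cs`, with weight
functions differentiable at `ρ₀`.  Then the derivative of the root value `κ̃_root`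
with respect to the design variable `ρ_{l₀}` is
`(Π_{(p,c) on the root-to-l₀ path} ω_{p,c}(ρ_p)) • Σ_{i ∈ C(l₀)} κ̃_i • dω_{l₀,i}/dρ_{l₀}`. -/
theorem hasFDerivAt_interp_updateAt (t : DTree E) (p : List ℕ) (ρ₀ : E)
    (cs : List ((E → ℝ) × DTree E))
    (hsub : subAt t p = some (node ρ₀ cs))
    (hdiff : ∀ q ∈ cs, DifferentiableAt ℝ q.1 ρ₀) :
    HasFDerivAt (fun x => interp (updateAt t p x))
      (pathProd t p • (cs.map (fun q => interp q.2 • fderiv ℝ q.1 ρ₀)).sum) ρ₀ := by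
  induction p generalizing t with
  | nil =>
    obtain rfl : t = node ρ₀ cs := by simpa [subAt] using hsub
    simpa only [updateAt, pathProd, one_smul, interp_node]
      using hasFDerivAt_sum_map_mul cs interp hdiff
  | cons i p ih =>
    obtain ⟨ρ, cs', q, rfl, hq, hsub'⟩ := subAt_cons_eq_some hsub
    simp only [updateAt_node_cons hq, interp_node_set hq, pathProd_node_cons hq, mul_smul]
    exact ((ih q.2 hsub').sub_const _).const_mul (q.1 ρ) |>.const_add _

end DTree
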